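/- arXiv:2006.03464 — 3 statements merged into one kernel-verified Lean document; each statement's English description precedes it below -/
import Mathlib

section
/- Let Ω ⊆ ℝ⁵ be open and let f : Ω → ℝ⁵ be smooth. Define P₄₅ = Z₂f₄ + ½(f₃Z₂f₁ − f₁Z₂f₃) − (1/6)(f₁(f₂Z₂f₁ − f₁Z₂f₂)) and P₄₂ = X₂f₄ + ½(f₃X₂f₁ − f₁X₂f₃) − (1/6)(f₁(f₂X₂f₁ − f₁X₂f₂)). Then X₂P₄₅ − Z₂P₄₂ = X₂f₃·Z₂f₁ − X₂f₁·Z₂f₃ + ½(f₁X₂f₁·Z₂f₂ − f₁X₂f₂·Z₂f₁), an expression involving only first derivatives of the components of f. -/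
noncomputable section

/-- The underlying space of the Cartan group: coordinates `(x₁, x₂, y, z₁, z₂)`. -/
abbrev E : Type := ℝ × ℝ × ℝ × ℝ × ℝ

/-- The Cartan group product. -/
def cmul (p q : E) : E :=
  (p.1 + q.1,
   p.2.1 + q.2.1,
   p.2.2.1 + q.2.2.1 + (p.1 * q.2.1 - p.2.1 * q.1) / 2,
   p.2.2.2.1 + q.2.2.2.1 + (p.1 * q.2.2.1 - p.2.2.1 * q.1) / 2
     + (p.1 - q.1) * (p.1 * q.2.1 - p.2.1 * q.1) / 12,
   p.2.2.2.2 + q.2.2.2.2 + (p.2.1 * q.2.2.1 - p.2.2.1 * q.2.1) / 2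
     + (p.2.1 - q.2.1) * (p.1 * q.2.1 - p.2.1 * q.1) / 12)

/-- The left-invariant vector field X₁, identified with its coefficient map. -/
def X1v (p : E) : E := (1, 0, -p.2.1 / 2, -(p.2.2.1 + p.1 * p.2.1 / 6) / 2, -p.2.1 ^ 2 / 12)

/-- The left-invariant vector field X₂. -/
def X2v (p : E) : E := (0, 1, p.1 / 2, p.1 ^ 2 / 12, -(p.2.2.1 - p.1 * p.2.1 / 6) / 2)

/-- The left-invariant vector field Y. -/
def Yv (p : E) : E := (0, 0, 1, p.1 / 2, p.2.1 / 2)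

/-- The left-invariant vector field Z₁. -/
def Z1v (_ : E) : E := (0, 0, 0, 1, 0)

/-- The left-invariant vector field Z₂. -/
def Z2v (_ : E) : E := (0, 0, 0, 0, 1)

/-- Lie bracket of vector fields: `[V,W](p) = DW(p)·V(p) − DV(p)·W(p)`. -/
def lieVF (V W : E → E) (p : E) : E := fderiv ℝ W p (V p) - fderiv ℝ V p (W p)

/-- A vector field acting as a first-order differential operator. -/
def Dop (V : E → E) (h : E → ℝ) (p : E) : ℝ := fderiv ℝ h p (V p)

lemma X2v_fderiv (p : E) :
    ∃ L : E →L[ℝ] E, HasFDerivAt X2v L p ∧ L (Z2v p) = 0 := by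
  set F1 : E →L[ℝ] ℝ := ContinuousLinearMap.fst ℝ ℝ (ℝ × ℝ × ℝ × ℝ) with hF1
  set F2 : E →L[ℝ] ℝ := (ContinuousLinearMap.fst ℝ ℝ (ℝ × ℝ × ℝ)).comp
    (ContinuousLinearMap.snd ℝ ℝ _) with hF2
  set F3 : E →L[ℝ] ℝ := ((ContinuousLinearMap.fst ℝ ℝ (ℝ × ℝ)).comp
    (ContinuousLinearMap.snd ℝ ℝ _)).comp (ContinuousLinearMap.snd ℝ ℝ _) with hF3
  have d1 : HasFDerivAt (fun q : E => q.1) F1 p := hasFDerivAt_fst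
  have d2 : HasFDerivAt (fun q : E => q.2.1) F2 p :=
    hasFDerivAt_fst.comp p hasFDerivAt_snd
  have d3 : HasFDerivAt (fun q : E => q.2.2.1) F3 p :=
    (hasFDerivAt_fst.comp _ hasFDerivAt_snd).comp p hasFDerivAt_snd
  have c3 : HasFDerivAt (fun q : E => q.1 / 2) ((2⁻¹ : ℝ) • F1) p := by
    simpa [div_eq_mul_inv] using d1.mul_const (2⁻¹ : ℝ)
  have c4 : HasFDerivAt (fun q : E => q.1 ^ 2 / 12)
      ((12⁻¹ : ℝ) • (p.1 • F1 + p.1 • F1)) p := by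
    simpa [div_eq_mul_inv, pow_two] using (d1.mul d1).mul_const (12⁻¹ : ℝ)
  have c5 : HasFDerivAt (fun q : E => -(q.2.2.1 - q.1 * q.2.1 / 6) / 2)
      ((2⁻¹ : ℝ) • (-(F3 - (6⁻¹ : ℝ) • (p.1 • F2 + p.2.1 • F1)))) p := by
    simpa [div_eq_mul_inv] using
      ((d3.sub ((d1.mul d2).mul_const (6⁻¹ : ℝ))).neg).mul_const (2⁻¹ : ℝ)
  refine ⟨_, HasFDerivAt.prodMk (hasFDerivAt_const (0:ℝ) p) (HasFDerivAt.prodMk (hasFDerivAt_const (1:ℝ) p)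
      (c3.prodMk (c4.prodMk c5))), ?_⟩
  show _ = (0 : E)
  simp [Z2v, hF1, hF2, hF3, Prod.ext_iff]

/-- The combination `X₂P₄₅ − Z₂P₄₂` involves only first derivatives of the
components of `f`. -/
theorem first_order_identity (Ω : Set E) (hΩ : IsOpen Ω)
    (f1 f2 f3 f4 f5 : E → ℝ)
    (h1 : ContDiffOn ℝ (⊤ : ℕ∞) f1 Ω) (h2 : ContDiffOn ℝ (⊤ : ℕ∞) f2 Ω)
    (h3 : ContDiffOn ℝ (⊤ : ℕ∞) f3 Ω) (h4 : ContDiffOn ℝ (⊤ : ℕ∞) f4 Ω)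
    (h5 : ContDiffOn ℝ (⊤ : ℕ∞) f5 Ω)
    (P45 P42 : E → ℝ)
    (hP45 : P45 = fun q => Dop Z2v f4 q
      + (f3 q * Dop Z2v f1 q - f1 q * Dop Z2v f3 q) / 2
      - (f1 q * (f2 q * Dop Z2v f1 q - f1 q * Dop Z2v f2 q)) / 6)
    (hP42 : P42 = fun q => Dop X2v f4 q
      + (f3 q * Dop X2v f1 q - f1 q * Dop X2v f3 q) / 2
      - (f1 q * (f2 q * Dop X2v f1 q - f1 q * Dop X2v f2 q)) / 6) :
    ∀ p ∈ Ω,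
      Dop X2v P45 p - Dop Z2v P42 p
        = Dop X2v f3 p * Dop Z2v f1 p - Dop X2v f1 p * Dop Z2v f3 p
          + (f1 p * Dop X2v f1 p * Dop Z2v f2 p
             - f1 p * Dop X2v f2 p * Dop Z2v f1 p) / 2 := by
  intro p hp
  have hmem : Ω ∈ nhds p := hΩ.mem_nhds hp
  have c1 : ContDiffAt ℝ (⊤ : ℕ∞) f1 p := h1.contDiffAt hmem
  have c2 : ContDiffAt ℝ (⊤ : ℕ∞) f2 p := h2.contDiffAt hmem
  have c3 : ContDiffAt ℝ (⊤ : ℕ∞) f3 p := h3.contDiffAt hmem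
  have c4 : ContDiffAt ℝ (⊤ : ℕ∞) f4 p := h4.contDiffAt hmem
  obtain ⟨L, hLd, hLz⟩ := X2v_fderiv p
  have hz : HasFDerivAt Z2v (0 : E →L[ℝ] E) p := hasFDerivAt_const _ _
  -- second-derivative maps
  have hB1 : HasFDerivAt (fderiv ℝ f1) (fderiv ℝ (fderiv ℝ f1) p) p :=
    ((c1.fderiv_right (m := 1) (WithTop.coe_le_coe.mpr le_top)).differentiableAt one_ne_zero).hasFDerivAt
  have hB2 : HasFDerivAt (fderiv ℝ f2) (fderiv ℝ (fderiv ℝ f2) p) p :=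
    ((c2.fderiv_right (m := 1) (WithTop.coe_le_coe.mpr le_top)).differentiableAt one_ne_zero).hasFDerivAt
  have hB3 : HasFDerivAt (fderiv ℝ f3) (fderiv ℝ (fderiv ℝ f3) p) p :=
    ((c3.fderiv_right (m := 1) (WithTop.coe_le_coe.mpr le_top)).differentiableAt one_ne_zero).hasFDerivAt
  have hB4 : HasFDerivAt (fderiv ℝ f4) (fderiv ℝ (fderiv ℝ f4) p) p :=
    ((c4.fderiv_right (m := 1) (WithTop.coe_le_coe.mpr le_top)).differentiableAt one_ne_zero).hasFDerivAt
  have hf1 : HasFDerivAt f1 (fderiv ℝ f1 p) p := (c1.differentiableAt (by simp)).hasFDerivAt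
  have hf2 : HasFDerivAt f2 (fderiv ℝ f2 p) p := (c2.differentiableAt (by simp)).hasFDerivAt
  have hf3 : HasFDerivAt f3 (fderiv ℝ f3 p) p := (c3.differentiableAt (by simp)).hasFDerivAt
  have hZ1 : HasFDerivAt (Dop Z2v f1)
      ((fderiv ℝ f1 p).comp (0 : E →L[ℝ] E) + (fderiv ℝ (fderiv ℝ f1) p).flip (Z2v p)) p :=
    hB1.clm_apply hz
  have hX1 : HasFDerivAt (Dop X2v f1)
      ((fderiv ℝ f1 p).comp L + (fderiv ℝ (fderiv ℝ f1) p).flip (X2v p)) p :=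
    hB1.clm_apply hLd
  have hZ2 : HasFDerivAt (Dop Z2v f2)
      ((fderiv ℝ f2 p).comp (0 : E →L[ℝ] E) + (fderiv ℝ (fderiv ℝ f2) p).flip (Z2v p)) p :=
    hB2.clm_apply hz
  have hX2 : HasFDerivAt (Dop X2v f2)
      ((fderiv ℝ f2 p).comp L + (fderiv ℝ (fderiv ℝ f2) p).flip (X2v p)) p :=
    hB2.clm_apply hLd
  have hZ3 : HasFDerivAt (Dop Z2v f3)
      ((fderiv ℝ f3 p).comp (0 : E →L[ℝ] E) + (fderiv ℝ (fderiv ℝ f3) p).flip (Z2v p)) p :=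
    hB3.clm_apply hz
  have hX3 : HasFDerivAt (Dop X2v f3)
      ((fderiv ℝ f3 p).comp L + (fderiv ℝ (fderiv ℝ f3) p).flip (X2v p)) p :=
    hB3.clm_apply hLd
  have hZ4 : HasFDerivAt (Dop Z2v f4)
      ((fderiv ℝ f4 p).comp (0 : E →L[ℝ] E) + (fderiv ℝ (fderiv ℝ f4) p).flip (Z2v p)) p :=
    hB4.clm_apply hz
  have hX4 : HasFDerivAt (Dop X2v f4)
      ((fderiv ℝ f4 p).comp L + (fderiv ℝ (fderiv ℝ f4) p).flip (X2v p)) p :=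
    hB4.clm_apply hLd
  have hP45d := (hZ4.add (((hf3.mul hZ1).sub (hf1.mul hZ3)).mul_const (2⁻¹ : ℝ))).sub
      ((hf1.mul ((hf2.mul hZ1).sub (hf1.mul hZ2))).mul_const (6⁻¹ : ℝ))
  have hP42d := (hX4.add (((hf3.mul hX1).sub (hf1.mul hX3)).mul_const (2⁻¹ : ℝ))).sub
      ((hf1.mul ((hf2.mul hX1).sub (hf1.mul hX2))).mul_const (6⁻¹ : ℝ))
  have sy : ∀ g : E → ℝ, ContDiffAt ℝ (⊤ : ℕ∞) g p →
      fderiv ℝ (fderiv ℝ g) p (Z2v p) (X2v p)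
        = fderiv ℝ (fderiv ℝ g) p (X2v p) (Z2v p) := fun g hg =>
    (hg.isSymmSndFDerivAt (by rw [minSmoothness_of_isRCLikeNormedField]; exact WithTop.coe_le_coe.mpr le_top)) _ _
  show fderiv ℝ P45 p (X2v p) - fderiv ℝ P42 p (Z2v p) = _
  rw [hP45, hP42]
  simp only [div_eq_mul_inv]
  simp only [Pi.add_def, Pi.sub_def, Pi.mul_def] at hP45d hP42d
  rw [hP45d.fderiv, hP42d.fderiv]
  simp only [Dop, ContinuousLinearMap.add_apply, ContinuousLinearMap.sub_apply,
    ContinuousLinearMap.smul_apply, ContinuousLinearMap.coe_comp', Function.comp_apply,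
    ContinuousLinearMap.flip_apply, ContinuousLinearMap.zero_apply, map_zero,
    ContinuousLinearMap.coe_zero, Pi.zero_apply, smul_eq_mul, hLz,
    sy f1 c1, sy f2 c2, sy f3 c3, sy f4 c4]
  ring
end
end

section
/- With the hypotheses of the previous setup (P₄₄ = J·a₁₁, P₅₄ = J·a₁₂, P₄₅ = J·a₂₁, P₅₅ = J·a₂₂, J = a₁₁a₂₂ − a₁₂a₂₁ ≠ 0, and the eight derivative identities XₖPᵢⱼ = −aₖᵢ'·tⱼ' as listed), the functions α := −P₄₅/(P₄₄P₅₅ − P₄₅P₅₄) and β := P₄₄/(P₄₄P₅₅ − P₄₅P₅₄) satisfy X₁α = X₂β. -/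
noncomputable section

lemma Dop_mul (V : E → E) (f g : E → ℝ) (p : E)
    (hf : DifferentiableAt ℝ f p) (hg : DifferentiableAt ℝ g p) :
    Dop V (fun q => f q * g q) p = f p * Dop V g p + g p * Dop V f p := by
  unfold Dop
  rw [fderiv_fun_mul hf hg]
  simp

lemma Dop_sub (V : E → E) (f g : E → ℝ) (p : E)
    (hf : DifferentiableAt ℝ f p) (hg : DifferentiableAt ℝ g p) :
    Dop V (fun q => f q - g q) p = Dop V f p - Dop V g p := by
  unfold Dop
  rw [fderiv_fun_sub hf hg]
  simp

lemma Dop_inv (V : E → E) (g : E → ℝ) (p : E)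
    (hg : DifferentiableAt ℝ g p) (h0 : g p ≠ 0) :
    Dop V (fun q => (g q)⁻¹) p = -(Dop V g p / g p ^ 2) := by
  unfold Dop
  have h : HasFDerivAt (fun q => (g q)⁻¹)
      (((1 : ℝ →L[ℝ] ℝ).smulRight (-(g p ^ 2)⁻¹)).comp (fderiv ℝ g p)) p :=
    (hasFDerivAt_inv h0).comp p hg.hasFDerivAt
  rw [h.fderiv]
  simp [div_eq_mul_inv, mul_comm]

lemma Dop_div (V : E → E) (f g : E → ℝ) (p : E)
    (hf : DifferentiableAt ℝ f p) (hg : DifferentiableAt ℝ g p) (h0 : g p ≠ 0) :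
    Dop V (fun q => f q / g q) p
      = (Dop V f p * g p - f p * Dop V g p) / g p ^ 2 := by
  have h1 : Dop V (fun q => f q * (g q)⁻¹) p
      = f p * Dop V (fun q => (g q)⁻¹) p + (g p)⁻¹ * Dop V f p :=
    Dop_mul V f (fun q => (g q)⁻¹) p hf (hg.inv h0)
  have h2 := Dop_inv V g p hg h0
  simp only [div_eq_mul_inv]
  rw [h1, h2]
  field_simp
  ring

/-- Under the differential identities (3.2) of the paper,
`α = −P₄₅/(P₄₄P₅₅ − P₄₅P₅₄)` and `β = P₄₄/(P₄₄P₅₅ − P₄₅P₅₄)` satisfy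
`X₁α = X₂β`. -/
theorem X1_alpha_eq_X2_beta (Ω : Set E) (hΩ : IsOpen Ω)
    (a11 a12 a21 a22 t1 t2 : E → ℝ)
    (ha11 : ContDiffOn ℝ (⊤ : ℕ∞) a11 Ω) (ha12 : ContDiffOn ℝ (⊤ : ℕ∞) a12 Ω)
    (ha21 : ContDiffOn ℝ (⊤ : ℕ∞) a21 Ω) (ha22 : ContDiffOn ℝ (⊤ : ℕ∞) a22 Ω)
    (ht1 : ContDiffOn ℝ (⊤ : ℕ∞) t1 Ω) (ht2 : ContDiffOn ℝ (⊤ : ℕ∞) t2 Ω)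
    (J : E → ℝ) (hJ : J = fun p => a11 p * a22 p - a12 p * a21 p)
    (hJne : ∀ p ∈ Ω, J p ≠ 0)
    (P44 P54 P45 P55 : E → ℝ)
    (hP44 : P44 = fun p => J p * a11 p) (hP54 : P54 = fun p => J p * a12 p)
    (hP45 : P45 = fun p => J p * a21 p) (hP55 : P55 = fun p => J p * a22 p)
    (d1 : ∀ p ∈ Ω, Dop X1v P44 p = -(a11 p * t1 p))
    (d2 : ∀ p ∈ Ω, Dop X2v P44 p = -(a21 p * t1 p))
    (d3 : ∀ p ∈ Ω, Dop X1v P54 p = -(a12 p * t1 p))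
    (d4 : ∀ p ∈ Ω, Dop X2v P54 p = -(a22 p * t1 p))
    (d5 : ∀ p ∈ Ω, Dop X1v P45 p = -(a11 p * t2 p))
    (d6 : ∀ p ∈ Ω, Dop X2v P45 p = -(a21 p * t2 p))
    (d7 : ∀ p ∈ Ω, Dop X1v P55 p = -(a12 p * t2 p))
    (d8 : ∀ p ∈ Ω, Dop X2v P55 p = -(a22 p * t2 p)) :
    ∀ p ∈ Ω,
      Dop X1v (fun q => -(P45 q) / (P44 q * P55 q - P45 q * P54 q)) p
        = Dop X2v (fun q => P44 q / (P44 q * P55 q - P45 q * P54 q)) p := by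
  intro p hp
  have hmem : Ω ∈ nhds p := hΩ.mem_nhds hp
  have hA11 : DifferentiableAt ℝ a11 p :=
    (ha11.differentiableOn (by simp)).differentiableAt hmem
  have hA12 : DifferentiableAt ℝ a12 p :=
    (ha12.differentiableOn (by simp)).differentiableAt hmem
  have hA21 : DifferentiableAt ℝ a21 p :=
    (ha21.differentiableOn (by simp)).differentiableAt hmem
  have hA22 : DifferentiableAt ℝ a22 p :=
    (ha22.differentiableOn (by simp)).differentiableAt hmem
  have hJd : DifferentiableAt ℝ J p := by
    rw [hJ]; exact (hA11.mul hA22).sub (hA12.mul hA21)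
  have h44 : DifferentiableAt ℝ P44 p := by rw [hP44]; exact hJd.mul hA11
  have h54 : DifferentiableAt ℝ P54 p := by rw [hP54]; exact hJd.mul hA12
  have h45 : DifferentiableAt ℝ P45 p := by rw [hP45]; exact hJd.mul hA21
  have h55 : DifferentiableAt ℝ P55 p := by rw [hP55]; exact hJd.mul hA22
  set D : E → ℝ := fun q => P44 q * P55 q - P45 q * P54 q with hD
  have hDd : DifferentiableAt ℝ D p := (h44.mul h55).sub (h45.mul h54)
  have hDp : D p = J p ^ 3 := by
    simp only [hD, hP44, hP45, hP54, hP55, hJ]; ring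
  have hJp : J p = a11 p * a22 p - a12 p * a21 p := by rw [hJ]
  have hJ0 : J p ≠ 0 := hJne p hp
  have hD0 : D p ≠ 0 := by rw [hDp]; exact pow_ne_zero _ hJ0
  have hnP45 : DifferentiableAt ℝ (fun q => -(P45 q)) p := h45.neg
  -- directional derivatives of D
  have hDopD1 : Dop X1v D p = -(J p ^ 2 * t1 p) := by
    have := Dop_sub X1v (fun q => P44 q * P55 q) (fun q => P45 q * P54 q) p
      (h44.mul h55) (h45.mul h54)
    rw [hD, this, Dop_mul X1v P44 P55 p h44 h55, Dop_mul X1v P45 P54 p h45 h54,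
      d1 p hp, d3 p hp, d5 p hp, d7 p hp, hP44, hP45, hP54, hP55]
    simp only [hJ]; ring
  have hDopD2 : Dop X2v D p = -(J p ^ 2 * t2 p) := by
    have := Dop_sub X2v (fun q => P44 q * P55 q) (fun q => P45 q * P54 q) p
      (h44.mul h55) (h45.mul h54)
    rw [hD, this, Dop_mul X2v P44 P55 p h44 h55, Dop_mul X2v P45 P54 p h45 h54,
      d2 p hp, d4 p hp, d6 p hp, d8 p hp, hP44, hP45, hP54, hP55]
    simp only [hJ]; ring
  have hDopNeg : Dop X1v (fun q => -(P45 q)) p = a11 p * t2 p := by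
    have : Dop X1v (fun q => -(P45 q)) p = -Dop X1v P45 p := by
      unfold Dop; rw [fderiv_fun_neg]; simp
    rw [this, d5 p hp]; ring
  rw [Dop_div X1v (fun q => -(P45 q)) D p hnP45 hDd hD0,
    Dop_div X2v P44 D p h44 hDd hD0,
    hDopNeg, hDopD1, hDopD2, d2 p hp, hDp]
  have h45p : P45 p = J p * a21 p := by rw [hP45]
  have h44p : P44 p = J p * a11 p := by rw [hP44]
  rw [h45p, h44p]
  field_simp
  ring
end
end

section
/- Every graded Lie algebra automorphism φ of the Cartan Lie algebra 𝔠 = 𝔠₁ ⊕ 𝔠₂ ⊕ 𝔠₃ is determined by its restriction A = φ|_{𝔠₁}: writing A(X₁) = aX₁ + cX₂, A(X₂) = bX₁ + dX₂, one has φ(Y) = (ad−bc)Y, φ(Z₁) = (ad−bc)(aZ₁ + cZ₂), and φ(Z₂) = (ad−bc)(bZ₁ + dZ₂); moreover ad−bc ≠ 0. -/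
noncomputable section

/-- The Cartan Lie algebra bracket in coordinates. -/
def br (u v : E) : E :=
  (0, 0,
   u.1 * v.2.1 - u.2.1 * v.1,
   u.1 * v.2.2.1 - u.2.2.1 * v.1,
   u.2.1 * v.2.2.1 - u.2.2.1 * v.2.1)

def e1 : E := (1, 0, 0, 0, 0)
def e2 : E := (0, 1, 0, 0, 0)
def e3 : E := (0, 0, 1, 0, 0)
def e4 : E := (0, 0, 0, 1, 0)
def e5 : E := (0, 0, 0, 0, 1)

/-- The first layer 𝔠₁ = span(X₁, X₂). -/
def g1 : Submodule ℝ E := Submodule.span ℝ {e1, e2}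

/-- The second layer 𝔠₂ = span(Y). -/
def g2 : Submodule ℝ E := Submodule.span ℝ {e3}

/-- The third layer 𝔠₃ = span(Z₁, Z₂). -/
def g3 : Submodule ℝ E := Submodule.span ℝ {e4, e5}

/-- A graded automorphism φ of the Cartan Lie algebra is determined by its
restriction A = φ|_{𝔠₁}: with A(X₁) = aX₁ + cX₂, A(X₂) = bX₁ + dX₂ one has
φ(Y) = (ad−bc)Y, φ(Z₁) = (ad−bc)(aZ₁ + cZ₂), φ(Z₂) = (ad−bc)(bZ₁ + dZ₂),
and ad−bc ≠ 0. -/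
theorem graded_automorphism (φ : E ≃ₗ[ℝ] E)
    (hbr : ∀ u v : E, φ (br u v) = br (φ u) (φ v))
    (hg1 : ∀ u ∈ g1, φ u ∈ g1)
    (hg2 : ∀ u ∈ g2, φ u ∈ g2)
    (hg3 : ∀ u ∈ g3, φ u ∈ g3)
    (a b c d : ℝ)
    (he1 : φ e1 = a • e1 + c • e2)
    (he2 : φ e2 = b • e1 + d • e2) :
    φ e3 = (a * d - b * c) • e3 ∧
    φ e4 = (a * d - b * c) • (a • e4 + c • e5) ∧
    φ e5 = (a * d - b * c) • (b • e4 + d • e5) ∧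
    a * d - b * c ≠ 0 := by
  have hb12 : br e1 e2 = e3 := by simp [br, e1, e2, e3]
  have hb13 : br e1 e3 = e4 := by simp [br, e1, e3, e4]
  have hb23 : br e2 e3 = e5 := by simp [br, e2, e3, e5]
  have h3 : φ e3 = (a * d - b * c) • e3 := by
    have h := hbr e1 e2
    rw [hb12, he1, he2] at h
    rw [h]
    simp [br, e1, e2, e3, Prod.ext_iff, Prod.smul_def]
    ring
  have h4 : φ e4 = (a * d - b * c) • (a • e4 + c • e5) := by
    have h := hbr e1 e3
    rw [hb13, he1, h3] at h
    rw [h]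
    simp [br, e1, e2, e3, e4, e5, Prod.ext_iff, Prod.smul_def]
    constructor <;> ring
  have h5 : φ e5 = (a * d - b * c) • (b • e4 + d • e5) := by
    have h := hbr e2 e3
    rw [hb23, he2, h3] at h
    rw [h]
    simp [br, e1, e2, e3, e4, e5, Prod.ext_iff, Prod.smul_def]
    constructor <;> ring
  refine ⟨h3, h4, h5, ?_⟩
  intro hdet
  rw [hdet, zero_smul] at h3
  have : (e3 : E) = 0 := φ.injective (h3.trans (map_zero φ).symm)
  simp [e3, Prod.ext_iff] at this
end
end
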